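/- Parallel decoupling iteration: suppose for every level-$k$ index $a$ and every $N^{k+1}L$-square $Q_{k+1}$ one has $\|g_{k,a}\|_{L^p(w_{Q_{k+1}})}^2 \leq C_3 \sum_{b \in A_{k+1,a}} \|g_{k+1,b}\|_{L^p(w_{Q_{k+1}})}^2$, that for every $N^kL$-square $Q_k$ one has $\big(\sum_{S \in \mathcal{T}(Q_k)}\|g\|_{L^p(w_S)}^p\big)^{1/p} \leq C_2^k\big(\sum_{a\in A_k}\|g_{k,a}\|_{L^p(w_{Q_k})}^2\big)^{1/2}$, and that $\sum_{Q_k \in \mathcal{J}} w_{Q_k} \leq C_4 w_{Q_{k+1}}$ for any tiling $\mathcal{J}$ of an $N^{k+1}L$-square $Q_{k+1}$ by $N^kL$-squares. Then for $2 \leq p < \infty$ and $C_2 = C_3^{1/2}C_4^{1/p}$, $\big(\sum_{S \in \mathcal{T}(Q_{k+1})}\|g\|_{L^p(w_S)}^p\big)^{1/p} \leq C_2^{k+1}\big(\sum_{b \in A_{k+1}}\|g_{k+1,b}\|_{L^p(w_{Q_{k+1}})}^2\big)^{1/2}$. -/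

import Mathlib

open MeasureTheory Set
open scoped ENNReal NNReal

/-- The `L`-square indexed by `n ∈ ℤ²`. -/
def sqTile (L : ℝ) (n : ℤ × ℤ) : Set (ℝ × ℝ) :=
  Set.Icc ((L * n.1, L * n.2) : ℝ × ℝ) (L * n.1 + L, L * n.2 + L)

/-- The standard weight of the `L`-square indexed by `n ∈ ℤ²`. -/
noncomputable def sqWeight (L : ℝ) (n : ℤ × ℤ) (x : ℝ × ℝ) : ℝ :=
  (1 + Real.sqrt (((x.1 - (L * n.1 + L / 2)) / L) ^ 2 +
      ((x.2 - (L * n.2 + L / 2)) / L) ^ 2)) ^ (-(100 : ℝ))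

/-- Weighted `L^p` norm over the weight of the `L`-square indexed by `n`. -/
noncomputable def sqNorm (p L : ℝ) (n : ℤ × ℤ) (g : ℝ × ℝ → ℂ) : ℝ≥0∞ :=
  (∫⁻ x, (‖g x‖₊ : ℝ≥0∞) ^ p * ENNReal.ofReal (sqWeight L n x)) ^ (1 / p)

/-! Split the `N^{k+1}L`-square into its `N^k L`-subsquares `Q_k` and apply the level-`k`
decoupling on each. The sum over `Q_k` of `(∑ₐ ‖g_{k,a}‖²_{L^p(w_{Q_k})})^{p/2}` is the
`p/2`-th power of an `ℓ^{p/2}` norm, so Minkowski (`p ≥ 2`) moves the sum over `a` outside; for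
each `a` the weight bound collects `∑_{Q_k} ‖g_{k,a}‖^p_{L^p(w_{Q_k})}` into
`C₄ ‖g_{k,a}‖^p_{L^p(w_{Q_{k+1}})}`, and the one-step decoupling with constant `C₃` finishes. -/

lemma mul_le_and_add_le_iff_ediv_eq {a : ℝ} (ha : 0 < a) {d : ℤ} (hd : 0 < d) (i j : ℤ) :
    (d * a * j ≤ a * i ∧ a * i + a ≤ d * a * j + d * a) ↔ i / d = j := by
  rw [Int.ediv_eq_iff_of_pos hd, Int.lt_iff_add_one_le, ← Int.cast_le (R := ℝ),
    ← Int.cast_le (R := ℝ)]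
  push_cast
  constructor <;> rintro ⟨h₁, h₂⟩ <;> constructor <;> nlinarith

lemma sqTile_subset_sqTile_iff {a : ℝ} (ha : 0 < a) {d : ℤ} (hd : 0 < d) (n m : ℤ × ℤ) :
    sqTile a n ⊆ sqTile (d * a) m ↔ (n.1 / d, n.2 / d) = m := by
  rw [sqTile, sqTile, Icc_subset_Icc_iff (Prod.mk_le_mk.2 ⟨by linarith, by linarith⟩),
    Prod.mk_le_mk, Prod.mk_le_mk, Prod.ext_iff, ← mul_le_and_add_le_iff_ediv_eq ha hd,
    ← mul_le_and_add_le_iff_ediv_eq ha hd]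
  tauto

abbrev sqSubtiles (a b : ℝ) (m : ℤ × ℤ) : Type := {n : ℤ × ℤ // sqTile a n ⊆ sqTile b m}

lemma finite_sqSubtiles {a b : ℝ} (ha : 0 < a) {d : ℤ} (hd : 0 < d) (hb : b = d * a)
    (m : ℤ × ℤ) : Finite (sqSubtiles a b m) := by
  subst hb
  refine Set.Finite.to_subtype <|
    (Set.finite_Icc (m.1 * d, m.2 * d) (m.1 * d + d, m.2 * d + d)).subset fun n hn => ?_
  change sqTile a n ⊆ sqTile (d * a) m at hn
  rw [sqTile_subset_sqTile_iff ha hd, Prod.ext_iff,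
    Int.ediv_eq_iff_of_pos hd, Int.ediv_eq_iff_of_pos hd] at hn
  exact ⟨⟨hn.1.1, hn.2.1⟩, ⟨hn.1.2.le, hn.2.2.le⟩⟩

lemma sqTile_ediv_subset_of_sqTile_subset {a : ℝ} (ha : 0 < a) {d e : ℤ} (hd : 0 < d)
    (he : 0 < e) {n m : ℤ × ℤ} (h : sqTile a n ⊆ sqTile (e * (d * a)) m) :
    sqTile (d * a) (n.1 / d, n.2 / d) ⊆ sqTile (e * (d * a)) m := by
  rw [← mul_assoc, mul_comm (e : ℝ), ← Int.cast_mul,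
    sqTile_subset_sqTile_iff ha (mul_pos hd he)] at h
  rwa [sqTile_subset_sqTile_iff (by positivity) he, Int.ediv_ediv_of_nonneg hd.le,
    Int.ediv_ediv_of_nonneg hd.le]

def sqSubtilesSigmaEquiv {a : ℝ} (ha : 0 < a) {d e : ℤ} (hd : 0 < d) (he : 0 < e)
    (m : ℤ × ℤ) :
    sqSubtiles a (e * (d * a)) m ≃
      Σ m' : sqSubtiles (d * a) (e * (d * a)) m, sqSubtiles a (d * a) m'.1 where
  toFun n := ⟨⟨_, sqTile_ediv_subset_of_sqTile_subset ha hd he n.2⟩,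
    ⟨n.1, (sqTile_subset_sqTile_iff ha hd _ _).2 rfl⟩⟩
  invFun x := ⟨x.2.1, x.2.2.trans x.1.2⟩
  left_inv _ := rfl
  right_inv := by
    rintro ⟨⟨m', _⟩, ⟨n, hn⟩⟩
    obtain rfl := (sqTile_subset_sqTile_iff ha hd n m').1 hn
    rfl

lemma tsum_sqSubtiles_eq_tsum_tsum {a b c : ℝ} (ha : 0 < a) {d e : ℤ} (hd : 0 < d)
    (he : 0 < e) (hb : b = d * a) (hc : c = e * b) (m : ℤ × ℤ) (f : ℤ × ℤ → ℝ≥0∞) :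
    ∑' n : sqSubtiles a c m, f n = ∑' m' : sqSubtiles b c m, ∑' n : sqSubtiles a b m'.1, f n := by
  subst hb hc
  rw [← (sqSubtilesSigmaEquiv ha hd he m).symm.tsum_eq]
  exact ENNReal.tsum_sigma' _

theorem ENNReal.Lp_finsetSum_le {κ J : Type*} [Fintype J] (s : Finset κ) (f : κ → J → ℝ≥0∞)
    {q : ℝ} (hq : 1 ≤ q) :
    (∑ j, (∑ a ∈ s, f a j) ^ q) ^ (1 / q) ≤ ∑ a ∈ s, (∑ j, f a j ^ q) ^ (1 / q) := by
  induction s using Finset.cons_induction with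
  | empty => simp [ENNReal.zero_rpow_of_pos, zero_lt_one.trans_le hq]
  | cons a s _ ih =>
    simp only [Finset.sum_cons]
    exact (ENNReal.Lp_add_le _ _ _ hq).trans (add_le_add_right ih _)

theorem ENNReal.rpow_one_div_le_mul_rpow_half_iff {x a y : ℝ≥0∞} {p : ℝ} (hp : 0 < p) :
    x ^ (1 / p) ≤ a * y ^ (1 / 2 : ℝ) ↔ x ≤ a ^ p * y ^ (p / 2) := by
  rw [one_div, ENNReal.rpow_inv_le_iff hp, ENNReal.mul_rpow_of_nonneg _ _ hp.le,
    ← ENNReal.rpow_mul, one_div_mul_eq_div]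

theorem MeasureTheory.le_lintegral_finsetSum {α κ : Type*} [MeasurableSpace α]
    {μ : Measure α} (s : Finset κ) (f : κ → α → ℝ≥0∞) :
    ∑ i ∈ s, ∫⁻ x, f i x ∂μ ≤ ∫⁻ x, ∑ i ∈ s, f i x ∂μ := by
  induction s using Finset.cons_induction with
  | empty => simp
  | cons a s _ ih =>
    simp only [Finset.sum_cons]
    exact (add_le_add_right ih _).trans (le_lintegral_add _ _)

theorem ENNReal.sum_rpow_sum_sq_le_of_sum_rpow_le {κ J : Type*} [Fintype J] (s : Finset κ)
    (u : κ → J → ℝ≥0∞) (v : κ → ℝ≥0∞) {p : ℝ} (hp : 2 ≤ p) (C : ℝ≥0∞)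
    (h : ∀ a ∈ s, ∑ j, u a j ^ p ≤ C * v a ^ p) :
    ∑ j, (∑ a ∈ s, u a j ^ (2 : ℝ)) ^ (p / 2) ≤ C * (∑ a ∈ s, v a ^ (2 : ℝ)) ^ (p / 2) := by
  have hq : 0 < p / 2 := by linarith
  have hsq : ∀ x : ℝ≥0∞, (x ^ (2 : ℝ)) ^ (p / 2) = x ^ p := fun x => by
    rw [← ENNReal.rpow_mul]; ring_nf
  have hterm : ∀ a ∈ s, (∑ j, (u a j ^ (2 : ℝ)) ^ (p / 2)) ^ (1 / (p / 2)) ≤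
      C ^ (1 / (p / 2)) * v a ^ (2 : ℝ) := fun a ha => by
    simp only [hsq]
    calc (∑ j, u a j ^ p) ^ (1 / (p / 2)) ≤ (C * v a ^ p) ^ (1 / (p / 2)) :=
          ENNReal.rpow_le_rpow (h a ha) (by positivity)
      _ = _ := by
          rw [ENNReal.mul_rpow_of_nonneg _ _ (by positivity), ← ENNReal.rpow_mul]
          congr 2
          field_simp
  have hmink := (ENNReal.Lp_finsetSum_le s (fun a j => u a j ^ (2 : ℝ)) (by linarith)).trans
    (Finset.sum_le_sum hterm)
  rw [← Finset.mul_sum, one_div, ENNReal.rpow_inv_le_iff hq,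
    ENNReal.mul_rpow_of_nonneg _ _ hq.le, ← ENNReal.rpow_mul, inv_mul_cancel₀ hq.ne',
    ENNReal.rpow_one] at hmink
  exact hmink

lemma sqWeight_nonneg (L : ℝ) (n : ℤ × ℤ) (x : ℝ × ℝ) : 0 ≤ sqWeight L n x :=
  Real.rpow_nonneg (by positivity) _

lemma sqNorm_rpow_self {p : ℝ} (hp : p ≠ 0) (L : ℝ) (n : ℤ × ℤ) (f : ℝ × ℝ → ℂ) :
    sqNorm p L n f ^ p = ∫⁻ x, (‖f x‖₊ : ℝ≥0∞) ^ p * ENNReal.ofReal (sqWeight L n x) := by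
  rw [sqNorm, ← ENNReal.rpow_mul, one_div_mul_cancel hp, ENNReal.rpow_one]

lemma sum_sqNorm_rpow_le {J : Type*} [Fintype J] {p a b C : ℝ} (hp : p ≠ 0) (ν : J → ℤ × ℤ)
    (m : ℤ × ℤ) (hw : ∀ x, ∑ j, sqWeight a (ν j) x ≤ C * sqWeight b m x) (f : ℝ × ℝ → ℂ) :
    ∑ j, sqNorm p a (ν j) f ^ p ≤ ENNReal.ofReal C * sqNorm p b m f ^ p := by
  simp only [sqNorm_rpow_self hp]
  rw [← lintegral_const_mul' _ _ ENNReal.ofReal_ne_top]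
  refine (le_lintegral_finsetSum _ _).trans (lintegral_mono fun x => ?_)
  rw [← Finset.mul_sum, ← ENNReal.ofReal_sum_of_nonneg fun j _ => sqWeight_nonneg _ _ _,
    mul_left_comm, ← ENNReal.ofReal_mul' (sqWeight_nonneg _ _ _)]
  gcongr
  exact hw x

lemma ofReal_pow_succ_rpow {p C₂ C₃ C₄ : ℝ} (hp : 0 < p) (hC₃ : 0 ≤ C₃) (hC₄ : 0 ≤ C₄)
    (hC₂ : C₂ = C₃ ^ (1 / 2 : ℝ) * C₄ ^ (1 / p)) (k : ℕ) :
    ENNReal.ofReal (C₂ ^ (k + 1)) ^ p =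
      ENNReal.ofReal (C₂ ^ k) ^ p * (ENNReal.ofReal C₄ * ENNReal.ofReal C₃ ^ (p / 2)) := by
  have hC₂' :
      ENNReal.ofReal C₂ = ENNReal.ofReal C₃ ^ (1 / 2 : ℝ) * ENNReal.ofReal C₄ ^ (1 / p) := by
    rw [hC₂, ENNReal.ofReal_mul (by positivity), ENNReal.ofReal_rpow_of_nonneg hC₃ (by norm_num),
      ENNReal.ofReal_rpow_of_nonneg hC₄ (by positivity)]
  have hC₂0 : 0 ≤ C₂ := hC₂ ▸ by positivity
  rw [ENNReal.ofReal_pow hC₂0, ENNReal.ofReal_pow hC₂0, pow_succ,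
    ENNReal.mul_rpow_of_nonneg _ _ hp.le, hC₂', ENNReal.mul_rpow_of_nonneg _ _ hp.le,
    ← ENNReal.rpow_mul, ← ENNReal.rpow_mul, one_div_mul_cancel hp.ne', ENNReal.rpow_one,
    mul_comm (1 / 2 : ℝ), ← div_eq_mul_one_div, mul_comm (ENNReal.ofReal C₃ ^ (p / 2))]

theorem stmt_15_general (p L : ℝ) (hp : 2 ≤ p) (hL : 0 < L) (N : ℕ) (hN : 2 ≤ N) (k : ℕ)
    (ι : Type) [DecidableEq ι] (Ak Ak1 : Finset ι) (π : ι → ι)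
    (hπ : ∀ b ∈ Ak1, π b ∈ Ak)
    (g : ℝ × ℝ → ℂ) (gk gk1 : ι → ℝ × ℝ → ℂ)
    (C₂ C₃ C₄ : ℝ) (hC₃ : 0 < C₃) (hC₄ : 0 < C₄)
    (hC₂ : C₂ = C₃ ^ (1/2 : ℝ) * C₄ ^ (1 / p))
    (H1 : ∀ a ∈ Ak, ∀ m : ℤ × ℤ,
      sqNorm p ((N : ℝ) ^ (k + 1) * L) m (gk a) ^ (2 : ℝ) ≤
        ENNReal.ofReal C₃ * ∑ b ∈ Ak1.filter (fun b => π b = a),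
          sqNorm p ((N : ℝ) ^ (k + 1) * L) m (gk1 b) ^ (2 : ℝ))
    (H2 : ∀ m : ℤ × ℤ,
      (∑' n : {n : ℤ × ℤ // sqTile L n ⊆ sqTile ((N : ℝ) ^ k * L) m},
          sqNorm p L n.1 g ^ p) ^ (1 / p) ≤
        ENNReal.ofReal (C₂ ^ k) *
          (∑ a ∈ Ak, sqNorm p ((N : ℝ) ^ k * L) m (gk a) ^ (2 : ℝ)) ^ (1/2 : ℝ))
    (H3 : ∀ m : ℤ × ℤ, ∀ x : ℝ × ℝ,
      (∑' n : {n : ℤ × ℤ // sqTile ((N : ℝ) ^ k * L) n ⊆ sqTile ((N : ℝ) ^ (k + 1) * L) m},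
          sqWeight ((N : ℝ) ^ k * L) n.1 x) ≤ C₄ * sqWeight ((N : ℝ) ^ (k + 1) * L) m x) :
    ∀ m : ℤ × ℤ,
      (∑' n : {n : ℤ × ℤ // sqTile L n ⊆ sqTile ((N : ℝ) ^ (k + 1) * L) m},
          sqNorm p L n.1 g ^ p) ^ (1 / p) ≤
        ENNReal.ofReal (C₂ ^ (k + 1)) *
          (∑ b ∈ Ak1, sqNorm p ((N : ℝ) ^ (k + 1) * L) m (gk1 b) ^ (2 : ℝ)) ^ (1/2 : ℝ) := by
  intro m
  have hp0 : 0 < p := by linarith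
  have hN0 : (0 : ℤ) < N := by omega
  have hb : (N : ℝ) ^ k * L = ((N ^ k : ℤ) : ℝ) * L := by push_cast; ring
  have hc : (N : ℝ) ^ (k + 1) * L = (N : ℤ) * ((N : ℝ) ^ k * L) := by push_cast; ring
  have := finite_sqSubtiles (by positivity) hN0 hc m
  have := Fintype.ofFinite (sqSubtiles ((N : ℝ) ^ k * L) ((N : ℝ) ^ (k + 1) * L) m)
  have hfiber : ∑ a ∈ Ak, sqNorm p ((N : ℝ) ^ (k + 1) * L) m (gk a) ^ (2 : ℝ) ≤
      ENNReal.ofReal C₃ * ∑ b ∈ Ak1, sqNorm p ((N : ℝ) ^ (k + 1) * L) m (gk1 b) ^ (2 : ℝ) := by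
    rw [← Finset.sum_fiberwise_of_maps_to hπ, Finset.mul_sum]
    exact Finset.sum_le_sum fun a ha => H1 a ha m
  rw [ENNReal.rpow_one_div_le_mul_rpow_half_iff hp0,
    ofReal_pow_succ_rpow hp0 hC₃.le hC₄.le hC₂ k,
    tsum_sqSubtiles_eq_tsum_tsum hL (by positivity) hN0 hb hc m fun n => sqNorm p L n g ^ p,
    tsum_fintype]
  calc _ ≤ _ := Finset.sum_le_sum fun m' _ =>
        (ENNReal.rpow_one_div_le_mul_rpow_half_iff hp0).1 (H2 m'.1)
    _ ≤ ENNReal.ofReal (C₂ ^ k) ^ p * (ENNReal.ofReal C₄ * (ENNReal.ofReal C₃ *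
          ∑ b ∈ Ak1, sqNorm p ((N : ℝ) ^ (k + 1) * L) m (gk1 b) ^ (2 : ℝ)) ^ (p / 2)) := by
        rw [← Finset.mul_sum]
        gcongr
        refine (ENNReal.sum_rpow_sum_sq_le_of_sum_rpow_le _ _ _ hp _ fun a _ => ?_).trans
          (by gcongr)
        exact sum_sqNorm_rpow_le hp0.ne' Subtype.val m
          (fun x => by simpa only [tsum_fintype] using H3 m x) _
    _ = _ := by rw [ENNReal.mul_rpow_of_nonneg _ _ (by positivity)]; ring

/-- parallel decoupling iteration.  Given the one-step decoupling of each
`g_{k,a}` into its children (H1), the level-`k` decoupling on `N^k L`-squares (H2), and the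
weight summation bound (H3), the level-`k+1` decoupling holds on `N^{k+1}L`-squares with
constant `C₂^{k+1}` where `C₂ = C₃^{1/2} C₄^{1/p}`. -/
theorem stmt_15 (p L : ℝ) (hp : 2 ≤ p) (hL : 0 < L) (N : ℕ) (hN : 2 ≤ N) (k : ℕ)
    (ι : Type) [DecidableEq ι] (Ak Ak1 : Finset ι) (π : ι → ι)
    (hπ : ∀ b ∈ Ak1, π b ∈ Ak)
    (g : ℝ × ℝ → ℂ) (gk gk1 : ι → ℝ × ℝ → ℂ)
    (hg : ∀ x, g x = ∑ a ∈ Ak, gk a x)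
    (hgk : ∀ a ∈ Ak, ∀ x, gk a x = ∑ b ∈ Ak1.filter (fun b => π b = a), gk1 b x)
    (C₂ C₃ C₄ : ℝ) (hC₃ : 0 < C₃) (hC₄ : 0 < C₄)
    (hC₂ : C₂ = C₃ ^ (1/2 : ℝ) * C₄ ^ (1 / p))
    (H1 : ∀ a ∈ Ak, ∀ m : ℤ × ℤ,
      sqNorm p ((N : ℝ) ^ (k + 1) * L) m (gk a) ^ (2 : ℝ) ≤
        ENNReal.ofReal C₃ * ∑ b ∈ Ak1.filter (fun b => π b = a),
          sqNorm p ((N : ℝ) ^ (k + 1) * L) m (gk1 b) ^ (2 : ℝ))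
    (H2 : ∀ m : ℤ × ℤ,
      (∑' n : {n : ℤ × ℤ // sqTile L n ⊆ sqTile ((N : ℝ) ^ k * L) m},
          sqNorm p L n.1 g ^ p) ^ (1 / p) ≤
        ENNReal.ofReal (C₂ ^ k) *
          (∑ a ∈ Ak, sqNorm p ((N : ℝ) ^ k * L) m (gk a) ^ (2 : ℝ)) ^ (1/2 : ℝ))
    (H3 : ∀ m : ℤ × ℤ, ∀ x : ℝ × ℝ,
      (∑' n : {n : ℤ × ℤ // sqTile ((N : ℝ) ^ k * L) n ⊆ sqTile ((N : ℝ) ^ (k + 1) * L) m},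
          sqWeight ((N : ℝ) ^ k * L) n.1 x) ≤ C₄ * sqWeight ((N : ℝ) ^ (k + 1) * L) m x) :
    ∀ m : ℤ × ℤ,
      (∑' n : {n : ℤ × ℤ // sqTile L n ⊆ sqTile ((N : ℝ) ^ (k + 1) * L) m},
          sqNorm p L n.1 g ^ p) ^ (1 / p) ≤
        ENNReal.ofReal (C₂ ^ (k + 1)) *
          (∑ b ∈ Ak1, sqNorm p ((N : ℝ) ^ (k + 1) * L) m (gk1 b) ^ (2 : ℝ)) ^ (1/2 : ℝ) :=
  stmt_15_general p L hp hL N hN k ι Ak Ak1 π hπ g gk gk1 C₂ C₃ C₄ hC₃ hC₄ hC₂ H1 H2 H3
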